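/- arXiv:1403.6714 — 3 statements merged into one kernel-verified Lean document; each statement's English description precedes it below -/
import Mathlib

section
/- The numbers of geometric hyperplanes of the binary Segre variety S_(3) having exactly 19, 15, 13, 11, and 9 points are respectively 27, 54, 108, 54, and 12. -/
open scoped symmDiff

/-- A point of the binary Segre variety `S_(N)`. -/
abbrev SegrePoint (N : ℕ) := Fin N → Fin 3

/-- The line of `S_(N)` through `f` in direction `i`. -/
def segreLine {N : ℕ} (i : Fin N) (f : SegrePoint N) : Set (SegrePoint N) :=
  {x | ∀ j, j ≠ i → x j = f j}

/-- A geometric hyperplane of `S_(N)`: a proper subset of the point set such that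
every line either lies fully in it or meets it in exactly one point. -/
def IsGeomHyperplane {N : ℕ} (H : Set (SegrePoint N)) : Prop :=
  H ≠ Set.univ ∧ ∀ (i : Fin N) (f : SegrePoint N),
    segreLine i f ⊆ H ∨ (segreLine i f ∩ H).ncard = 1

/-- Two points of `S_(N)` are collinear iff they differ in exactly one coordinate. -/
def SegreCollinear {N : ℕ} (x y : SegrePoint N) : Prop :=
  hammingDist x y = 1

/-- An ovoid of `S_(N)`: a set of `3^(N-1)` pairwise non-collinear points. -/
def IsOvoid {N : ℕ} (O : Set (SegrePoint N)) : Prop :=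
  O.ncard = 3 ^ (N - 1) ∧ O.Pairwise fun x y => ¬ SegreCollinear x y

abbrev Q3 := Fin 3 → Fin 2

def c2 : Fin 2 → Fin 3 := Fin.castLE (by omega)

def wv : Fin 3 → Fin 2 → ZMod 2 := fun t b =>
  if t = 2 then 1 else if (t : ℕ) = (b : ℕ) then 1 else 0

def extPsi (ψ : Q3 → ZMod 2) (x : SegrePoint 3) : ZMod 2 :=
  ∑ g : Q3, ψ g * ∏ j : Fin 3, wv (x j) (g j)

lemma wv_cast : ∀ a b : Fin 2, wv (c2 a) b = if b = a then 1 else 0 := by decide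

lemma sum_wv : ∀ b : Fin 2, (∑ t : Fin 3, wv t b) = 0 := by
  have h : ∀ b : Fin 2, wv 0 b + wv 1 b + wv 2 b = 0 := by decide
  intro b; rw [Fin.sum_univ_three]; exact h b

lemma ext_cube (ψ : Q3 → ZMod 2) (g : Q3) : extPsi ψ (c2 ∘ g) = ψ g := by
  rw [extPsi, Finset.sum_eq_single g]
  · simp [wv_cast]
  · intro h _ hne
    obtain ⟨j, hj⟩ : ∃ j, h j ≠ g j := by
      by_contra hc; push_neg at hc; exact hne (funext hc)
    apply mul_eq_zero_of_right
    exact Finset.prod_eq_zero (Finset.mem_univ j) (by simp [Function.comp, wv_cast, hj])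
  · simp

lemma ext_line (ψ : Q3 → ZMod 2) (i : Fin 3) (f : SegrePoint 3) :
    ∑ t : Fin 3, extPsi ψ (Function.update f i t) = 0 := by
  simp only [extPsi]
  rw [Finset.sum_comm]
  refine Finset.sum_eq_zero fun g _ => ?_
  have hp : ∀ t : Fin 3, (∏ j : Fin 3, wv (Function.update f i t j) (g j))
      = wv t (g i) * ∏ j ∈ Finset.univ.erase i, wv (f j) (g j) := by
    intro t
    rw [← Finset.mul_prod_erase Finset.univ _ (Finset.mem_univ i)]
    congr 1
    · simp
    · refine Finset.prod_congr rfl fun j hj => ?_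
      rw [Function.update_of_ne (Finset.ne_of_mem_erase hj)]
  calc ∑ t : Fin 3, ψ g * ∏ j : Fin 3, wv (Function.update f i t j) (g j)
      = ∑ t : Fin 3, ψ g * (wv t (g i) * ∏ j ∈ Finset.univ.erase i, wv (f j) (g j)) := by
        exact Finset.sum_congr rfl fun t _ => by rw [hp]
    _ = ψ g * ((∑ t : Fin 3, wv t (g i)) * ∏ j ∈ Finset.univ.erase i, wv (f j) (g j)) := by
        rw [← Finset.mul_sum, ← Finset.sum_mul]
    _ = 0 := by rw [sum_wv]; ring

lemma fin3_cases : ∀ t : Fin 3, t = 0 ∨ t = 1 ∨ t = 2 := by decide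

lemma segreLine_eq (i : Fin 3) (f : SegrePoint 3) :
    segreLine i f = {Function.update f i 0, Function.update f i 1, Function.update f i 2} := by
  ext x
  constructor
  · intro h
    have hx : x = Function.update f i (x i) := by
      funext j
      by_cases hj : j = i
      · subst hj; simp [Function.update]
      · rw [Function.update_of_ne hj]; exact h j hj
    rcases fin3_cases (x i) with h0 | h0 | h0 <;> rw [h0] at hx
    · exact Or.inl hx
    · exact Or.inr (Or.inl hx)
    · exact Or.inr (Or.inr hx)
  · intro h
    rcases h with h | h | h <;> subst h <;> intro j hj <;> exact Function.update_of_ne hj _ _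

lemma update_ne (f : SegrePoint 3) (i : Fin 3) {s t : Fin 3} (h : s ≠ t) :
    Function.update f i s ≠ Function.update f i t := by
  intro hc
  apply h
  have := congrFun hc i
  simpa using this

lemma update_mem_line (f : SegrePoint 3) (i : Fin 3) (t : Fin 3) :
    Function.update f i t ∈ segreLine i f := by
  intro j hj; exact Function.update_of_ne hj _ _

/-- number of coordinates equal to 2 -/
def m2 (x : SegrePoint 3) : ℕ := (Finset.univ.filter fun j => x j = 2).card

lemma ext_unique (F G : SegrePoint 3 → ZMod 2)
    (hF : ∀ (i : Fin 3) (f : SegrePoint 3),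
      ∑ t : Fin 3, F (Function.update f i t) = 0)
    (hG : ∀ (i : Fin 3) (f : SegrePoint 3),
      ∑ t : Fin 3, G (Function.update f i t) = 0)
    (hc : ∀ g : Q3, F (c2 ∘ g) = G (c2 ∘ g)) : F = G := by
  have key : ∀ n (x : SegrePoint 3), m2 x ≤ n → F x = G x := by
    intro n
    induction n with
    | zero =>
      intro x hx
      rw [m2] at hx
      have hall : ∀ j, x j ≠ 2 := by
        intro j hj
        have : j ∈ Finset.univ.filter fun j => x j = 2 := by simp [hj]
        have := Finset.card_pos.mpr ⟨j, this⟩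
        omega
      have hlt : ∀ j, (x j : ℕ) < 2 := by
        intro j
        have h3 := (x j).isLt
        have : (x j : ℕ) ≠ 2 := fun h => hall j (Fin.ext h)
        omega
      have hx2 : x = c2 ∘ (fun j => ⟨(x j : ℕ), hlt j⟩) := by
        funext j; exact Fin.ext rfl
      rw [hx2]; exact hc _
    | succ n ih =>
      intro x hx
      by_cases hn : m2 x ≤ n
      · exact ih x hn
      · obtain ⟨i, hi⟩ : ∃ i, x i = 2 := by
          have : 0 < m2 x := by omega
          obtain ⟨i, hi⟩ := Finset.card_pos.mp this
          exact ⟨i, (Finset.mem_filter.mp hi).2⟩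
        have hxupd : Function.update x i 2 = x := by
          funext j
          by_cases hj : j = i
          · subst hj; simp [Function.update, hi]
          · exact Function.update_of_ne hj _ _
        have hmem : i ∈ Finset.univ.filter fun j => x j = 2 := by simp [hi]
        have hmu : ∀ t : Fin 3, t ≠ 2 → m2 (Function.update x i t) ≤ n := by
          intro t ht
          have hset : (Finset.univ.filter fun j => Function.update x i t j = 2)
              = (Finset.univ.filter fun j => x j = 2).erase i := by
            ext j
            simp only [Finset.mem_filter, Finset.mem_erase, Finset.mem_univ, true_and]
            by_cases hj : j = i
            · subst hj; simp [Function.update, ht]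
            · rw [Function.update_of_ne hj]; tauto
          have : m2 (Function.update x i t) = m2 x - 1 := by
            unfold m2
            rw [hset, Finset.card_erase_of_mem hmem]
          omega
        have hadd : ∀ a b c : ZMod 2, a + b + c = 0 → c = a + b := by decide
        have hF' := hF i x
        have hG' := hG i x
        rw [Fin.sum_univ_three] at hF' hG'
        rw [hxupd] at hF' hG'
        have eF : F x = F (Function.update x i 0) + F (Function.update x i 1) :=
          hadd _ _ _ hF'
        have eG : G x = G (Function.update x i 0) + G (Function.update x i 1) :=
          hadd _ _ _ hG'
        rw [eF, eG, ih _ (hmu 0 (by decide)), ih _ (hmu 1 (by decide))]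
  funext x
  exact key (m2 x) x le_rfl

def Hset (ψ : Q3 → ZMod 2) : Set (SegrePoint 3) := {x | extPsi ψ x = 0}

lemma zmod2_cases : ∀ a b c : ZMod 2, a + b + c = 0 →
    (a = 0 ∧ b = 0 ∧ c = 0) ∨ (a = 0 ∧ b ≠ 0 ∧ c ≠ 0) ∨
    (a ≠ 0 ∧ b = 0 ∧ c ≠ 0) ∨ (a ≠ 0 ∧ b ≠ 0 ∧ c = 0) := by decide

lemma hyp_char (H : Set (SegrePoint 3)) :
    IsGeomHyperplane H ↔ ∃ ψ : Q3 → ZMod 2, ψ ≠ 0 ∧ H = Hset ψ := by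
  constructor
  · rintro ⟨hprop, hline⟩
    classical
    set χ : SegrePoint 3 → ZMod 2 := fun x => if x ∈ H then 0 else 1 with hχ
    have hχ0 : ∀ x, χ x = 0 ↔ x ∈ H := by
      intro x
      by_cases h : x ∈ H <;> simp [hχ, h]
    -- χ satisfies the line relation
    have hrel : ∀ (i : Fin 3) (f : SegrePoint 3),
        ∑ t : Fin 3, χ (Function.update f i t) = 0 := by
      intro i f
      rw [Fin.sum_univ_three]
      rcases hline i f with hsub | hone
      · have h0 : ∀ t : Fin 3, Function.update f i t ∈ H :=
          fun t => hsub (update_mem_line f i t)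
        simp [(hχ0 _).mpr (h0 0), (hχ0 _).mpr (h0 1), (hχ0 _).mpr (h0 2)]
      · obtain ⟨a, ha⟩ := Set.ncard_eq_one.mp hone
        have haline : a ∈ segreLine i f ∩ H := ha ▸ rfl
        have hmemiff : ∀ t : Fin 3, (Function.update f i t ∈ H ↔ Function.update f i t = a) := by
          intro t
          constructor
          · intro hmem
            have : Function.update f i t ∈ segreLine i f ∩ H := ⟨update_mem_line f i t, hmem⟩
            rw [ha] at this
            exact this
          · intro he; rw [he]; exact haline.2
        have haeq : a = Function.update f i (a i) := by
          have h1 := haline.1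
          funext j
          by_cases hj : j = i
          · subst hj; simp [Function.update]
          · rw [Function.update_of_ne hj]; exact h1 j hj
        -- exactly the index a i is in H
        have hval : ∀ t : Fin 3, χ (Function.update f i t) = if t = a i then 0 else 1 := by
          intro t
          by_cases ht : t = a i
          · rw [if_pos ht, (hχ0 _).mpr]
            rw [(hmemiff t), ht, ← haeq]
          · rw [if_neg ht, hχ]
            simp only []
            rw [if_neg]
            intro hmem
            have := (hmemiff t).mp hmem
            rw [haeq] at this
            exact ht (by
              have := congrFun this i
              simpa using this)
        rw [hval 0, hval 1, hval 2]
        rcases fin3_cases (a i) with h | h | h <;> rw [h] <;> decide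
    set ψ : Q3 → ZMod 2 := fun g => χ (c2 ∘ g) with hψ
    have hchiext : χ = extPsi ψ := by
      apply ext_unique _ _ hrel (fun i f => ext_line ψ i f)
      intro g
      rw [ext_cube]
    refine ⟨ψ, ?_, ?_⟩
    · intro hz
      apply hprop
      ext x
      simp only [Set.mem_univ, iff_true]
      rw [← hχ0, hchiext, hz]
      simp [extPsi]
    · ext x
      rw [← hχ0, hchiext]
      rfl
  · rintro ⟨ψ, hψ, rfl⟩
    constructor
    · obtain ⟨g, hg⟩ : ∃ g, ψ g ≠ 0 := by
        by_contra hc; push_neg at hc; exact hψ (funext fun g => hc g)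
      intro hu
      have : extPsi ψ (c2 ∘ g) = 0 := by
        have : (c2 ∘ g) ∈ Hset ψ := hu ▸ Set.mem_univ _
        exact this
      rw [ext_cube] at this
      exact hg this
    · intro i f
      have hsum := ext_line ψ i f
      rw [Fin.sum_univ_three] at hsum
      rw [segreLine_eq]
      rcases zmod2_cases _ _ _ hsum with ⟨h0, h1, h2⟩ | ⟨h0, h1, h2⟩ | ⟨h0, h1, h2⟩ | ⟨h0, h1, h2⟩
      · left
        rintro x (rfl | rfl | rfl)
        exacts [h0, h1, h2]
      · right
        have : ({Function.update f i 0, Function.update f i 1, Function.update f i 2} :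
            Set (SegrePoint 3)) ∩ Hset ψ = {Function.update f i 0} := by
          ext x
          simp only [Set.mem_inter_iff, Set.mem_insert_iff, Set.mem_singleton_iff, Hset,
            Set.mem_setOf_eq]
          constructor
          · rintro ⟨rfl | rfl | rfl, hx⟩
            · rfl
            · exact absurd hx h1
            · exact absurd hx h2
          · rintro rfl; exact ⟨Or.inl rfl, h0⟩
        rw [this, Set.ncard_singleton]
      · right
        have : ({Function.update f i 0, Function.update f i 1, Function.update f i 2} :
            Set (SegrePoint 3)) ∩ Hset ψ = {Function.update f i 1} := by
          ext x
          simp only [Set.mem_inter_iff, Set.mem_insert_iff, Set.mem_singleton_iff, Hset,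
            Set.mem_setOf_eq]
          constructor
          · rintro ⟨rfl | rfl | rfl, hx⟩
            · exact absurd hx h0
            · rfl
            · exact absurd hx h2
          · rintro rfl; exact ⟨Or.inr (Or.inl rfl), h1⟩
        rw [this, Set.ncard_singleton]
      · right
        have : ({Function.update f i 0, Function.update f i 1, Function.update f i 2} :
            Set (SegrePoint 3)) ∩ Hset ψ = {Function.update f i 2} := by
          ext x
          simp only [Set.mem_inter_iff, Set.mem_insert_iff, Set.mem_singleton_iff, Hset,
            Set.mem_setOf_eq]
          constructor
          · rintro ⟨rfl | rfl | rfl, hx⟩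
            · exact absurd hx h0
            · exact absurd hx h1
            · rfl
          · rintro rfl; exact ⟨Or.inr (Or.inr rfl), h2⟩
        rw [this, Set.ncard_singleton]

lemma zmod2_eq_of_zero_iff : ∀ a b : ZMod 2, (a = 0 ↔ b = 0) → a = b := by decide

lemma Hset_injective : Function.Injective Hset := by
  intro ψ ψ' h
  have hx : ∀ x, extPsi ψ x = extPsi ψ' x := by
    intro x
    apply zmod2_eq_of_zero_iff
    constructor
    · intro h0
      have : x ∈ Hset ψ := h0
      rw [h] at this
      exact this
    · intro h0
      have : x ∈ Hset ψ' := h0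
      rw [← h] at this
      exact this
  funext g
  rw [← ext_cube ψ g, ← ext_cube ψ' g]
  exact hx _

lemma Hset_ncard (ψ : Q3 → ZMod 2) :
    (Hset ψ).ncard = (Finset.univ.filter fun x : SegrePoint 3 => extPsi ψ x = 0).card := by
  rw [show Hset ψ = ↑(Finset.univ.filter fun x : SegrePoint 3 => extPsi ψ x = 0) by
    ext x; simp [Hset]]
  exact Set.ncard_coe_finset _

lemma main_count (k n : ℕ)
    (h : (Finset.univ.filter fun ψ : Q3 → ZMod 2 => ψ ≠ 0 ∧
      (Finset.univ.filter fun x : SegrePoint 3 => extPsi ψ x = 0).card = k).card = n) :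
    {H : Set (SegrePoint 3) | IsGeomHyperplane H ∧ H.ncard = k}.ncard = n := by
  have hset : {H : Set (SegrePoint 3) | IsGeomHyperplane H ∧ H.ncard = k}
      = Hset '' {ψ : Q3 → ZMod 2 | ψ ≠ 0 ∧ (Hset ψ).ncard = k} := by
    ext H
    simp only [Set.mem_setOf_eq, Set.mem_image]
    constructor
    · rintro ⟨hH, hcard⟩
      obtain ⟨ψ, hψ, rfl⟩ := (hyp_char H).mp hH
      exact ⟨ψ, ⟨hψ, hcard⟩, rfl⟩
    · rintro ⟨ψ, ⟨hψ, hcard⟩, rfl⟩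
      exact ⟨(hyp_char _).mpr ⟨ψ, hψ, rfl⟩, hcard⟩
  rw [hset, Set.ncard_image_of_injective _ Hset_injective]
  have hset2 : {ψ : Q3 → ZMod 2 | ψ ≠ 0 ∧ (Hset ψ).ncard = k}
      = ↑(Finset.univ.filter fun ψ : Q3 → ZMod 2 => ψ ≠ 0 ∧
        (Finset.univ.filter fun x : SegrePoint 3 => extPsi ψ x = 0).card = k) := by
    ext ψ
    simp only [Set.mem_setOf_eq, Finset.coe_filter, Finset.mem_univ, true_and, Hset_ncard]
  rw [hset2, Set.ncard_coe_finset, h]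

set_option maxRecDepth 100000 in
set_option maxHeartbeats 4000000 in
theorem segre3_hyperplane_size_counts :
    {H : Set (SegrePoint 3) | IsGeomHyperplane H ∧ H.ncard = 19}.ncard = 27 ∧
    {H : Set (SegrePoint 3) | IsGeomHyperplane H ∧ H.ncard = 15}.ncard = 54 ∧
    {H : Set (SegrePoint 3) | IsGeomHyperplane H ∧ H.ncard = 13}.ncard = 108 ∧
    {H : Set (SegrePoint 3) | IsGeomHyperplane H ∧ H.ncard = 11}.ncard = 54 ∧
    {H : Set (SegrePoint 3) | IsGeomHyperplane H ∧ H.ncard = 9}.ncard = 12 :=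
  ⟨main_count 19 27 (by decide), main_count 15 54 (by decide), main_count 13 108 (by decide),
   main_count 11 54 (by decide), main_count 9 12 (by decide)⟩
end

section
/- The binary Segre variety S_(3) has exactly 12 ovoids; each ovoid of S_(3) is a geometric hyperplane of S_(3), and the ovoids are exactly the geometric hyperplanes of S_(3) with exactly 9 points. -/
set_option maxRecDepth 10000

open scoped symmDiff

/-! ### Auxiliary material -/

abbrev P3 := SegrePoint 3

lemma eta3 (x : P3) : x = ![x 0, x 1, x 2] := by
  funext j; fin_cases j <;> simp

lemma ham_single {N : ℕ} (i : Fin N) {x y : Fin N → Fin 3}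
    (h : ∀ j, j ≠ i → x j = y j) (hxy : x ≠ y) : hammingDist x y = 1 := by
  have hxi : x i ≠ y i := by
    intro he; apply hxy; funext j
    by_cases hj : j = i
    · subst hj; exact he
    · exact h j hj
  show (Finset.univ.filter fun j => x j ≠ y j).card = 1
  rw [Finset.card_eq_one]
  refine ⟨i, ?_⟩
  ext j
  simp only [Finset.mem_filter, Finset.mem_univ, true_and, Finset.mem_singleton]
  constructor
  · intro hne; by_contra hj; exact hne (h j hj)
  · rintro rfl; exact hxi

lemma ham_one {N : ℕ} {x y : Fin N → Fin 3} (h : hammingDist x y = 1) :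
    ∃ i, x i ≠ y i ∧ ∀ j, j ≠ i → x j = y j := by
  have h' : (Finset.univ.filter fun j => x j ≠ y j).card = 1 := h
  rw [Finset.card_eq_one] at h'
  obtain ⟨i, hi⟩ := h'
  have hmem : ∀ j, (x j ≠ y j) ↔ j = i := by
    intro j
    rw [← Finset.mem_singleton, ← hi]
    simp
  exact ⟨i, (hmem i).mpr rfl, fun j hj => not_not.mp (fun hne => hj ((hmem j).mp hne))⟩

lemma mem_line_iff {N : ℕ} {i : Fin N} {f x : SegrePoint N} :
    x ∈ segreLine i f ↔ Function.update x i 0 = Function.update f i 0 := by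
  constructor
  · intro h; funext j
    by_cases hj : j = i
    · subst hj; simp
    · rw [Function.update_of_ne hj, Function.update_of_ne hj]; exact h j hj
  · intro h j hj
    have := congrFun h j
    rwa [Function.update_of_ne hj, Function.update_of_ne hj] at this

lemma line_ncard {N : ℕ} (i : Fin N) (f : SegrePoint N) : (segreLine i f).ncard = 3 := by
  have he : segreLine i f = (fun c => Function.update f i c) '' Set.univ := by
    ext x
    simp only [Set.image_univ, Set.mem_range]
    constructor
    · intro hx
      refine ⟨x i, ?_⟩
      funext j
      by_cases hj : j = i
      · subst hj; simp
      · rw [Function.update_of_ne hj]; exact (hx j hj).symm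
    · rintro ⟨c, rfl⟩ j hj; rw [Function.update_of_ne hj]
  have hinj : Function.Injective (fun c => Function.update f i c) := by
    intro c c' h
    have := congrFun h i
    simpa using this
  rw [he, Set.ncard_image_of_injective _ hinj, Set.ncard_univ]
  simp

lemma T_ncard (i : Fin 3) : {g : Fin 3 → Fin 3 | g i = 0}.ncard = 9 := by
  have he : {g : Fin 3 → Fin 3 | g i = 0}
      = ↑(Finset.univ.filter fun g : Fin 3 → Fin 3 => g i = 0) := by
    ext g; simp
  rw [he, Set.ncard_coe_finset]
  fin_cases i <;> decide

lemma ovoid_card9 {O : Set P3} (hO : IsOvoid O) : O.ncard = 9 := by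
  have h := hO.1; norm_num at h; exact h

lemma ovoid_line {O : Set P3} (hO : IsOvoid O) (i : Fin 3) (f : P3) :
    ∃! x, x ∈ segreLine i f ∩ O := by
  have hcard : O.ncard = 9 := ovoid_card9 hO
  have hinj : Set.InjOn (fun x => Function.update x i 0) O := by
    intro x hx y hy hxy
    by_contra hne
    refine hO.2 hx hy hne ?_
    refine ham_single i (fun j hj => ?_) hne
    have := congrFun hxy j
    simpa [Function.update_of_ne hj] using this
  have himg : (fun x => Function.update x i 0) '' O = {g : Fin 3 → Fin 3 | g i = 0} := by
    apply Set.eq_of_subset_of_ncard_le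
    · rintro g ⟨x, _, rfl⟩; simp
    · rw [T_ncard, Set.ncard_image_of_injOn hinj, hcard]
    · exact Set.toFinite _
  have hg0 : Function.update f i 0 ∈ {g : Fin 3 → Fin 3 | g i = 0} := by simp
  rw [← himg] at hg0
  obtain ⟨x, hxO, hx⟩ := hg0
  refine ⟨x, ⟨mem_line_iff.mpr hx, hxO⟩, ?_⟩
  rintro y ⟨hyl, hyO⟩
  exact hinj hyO hxO ((mem_line_iff.mp hyl).trans hx.symm)

lemma no_line {H : Set P3} (hH : IsGeomHyperplane H) (h9 : H.ncard = 9)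
    (i : Fin 3) (f : P3) : ¬ segreLine i f ⊆ H := by
  classical
  intro hsub
  have hfin : H.Finite := Set.toFinite H
  set s : Finset P3 := hfin.toFinset with hs
  have hscard : s.card = 9 := by
    rw [← Set.ncard_eq_toFinset_card H hfin]; exact h9
  set t : Finset (Fin 3 → Fin 3) := Finset.univ.filter (fun g => g i = 0) with ht
  have htcard : t.card = 9 := by
    have h1 := T_ncard i
    have h2 : {g : Fin 3 → Fin 3 | g i = 0} = ↑t := by ext g; simp [ht]
    rw [h2, Set.ncard_coe_finset] at h1
    exact h1
  have hfiber : ∀ g ∈ t, ((s.filter fun x => Function.update x i 0 = g)).card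
      = (segreLine i g ∩ H).ncard := by
    intro g hg
    have hgi : g i = 0 := by simpa [ht] using hg
    have hup : Function.update g i 0 = g := by
      funext j
      by_cases hj : j = i
      · subst hj; simp [hgi]
      · simp [Function.update_of_ne hj]
    have he : segreLine i g ∩ H = ↑(s.filter fun x => Function.update x i 0 = g) := by
      ext x
      simp only [Set.mem_inter_iff, Finset.coe_filter, Set.mem_setOf_eq, Finset.mem_filter,
        hs, Set.Finite.mem_toFinset]
      rw [mem_line_iff, hup]
      tauto
    rw [he, Set.ncard_coe_finset]
  have hsum : s.card = ∑ g ∈ t, (s.filter fun x => Function.update x i 0 = g).card :=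
    Finset.card_eq_sum_card_fiberwise (fun x _ => by simp [ht])
  have hone : ∀ g ∈ t.erase (Function.update f i 0),
      1 ≤ (s.filter fun x => Function.update x i 0 = g).card := by
    intro g hg
    have hg' := Finset.mem_of_mem_erase hg
    rw [hfiber g hg']
    rcases hH.2 i g with hsub' | hcard
    · rw [Set.inter_eq_self_of_subset_left hsub', line_ncard]; omega
    · omega
  have hg0t : Function.update f i 0 ∈ t := by simp [ht]
  have hbig : (s.filter fun x => Function.update x i 0 = Function.update f i 0).card = 3 := by
    rw [hfiber _ hg0t]
    have hline : segreLine i (Function.update f i 0) = segreLine i f := by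
      ext x; rw [mem_line_iff, mem_line_iff, Function.update_idem]
    rw [hline, Set.inter_eq_self_of_subset_left hsub, line_ncard]
  have hsplit := Finset.add_sum_erase t
    (fun g => (s.filter fun x => Function.update x i 0 = g).card) hg0t
  have hrest : (t.erase (Function.update f i 0)).card ≤
      ∑ g ∈ t.erase (Function.update f i 0),
        (s.filter fun x => Function.update x i 0 = g).card := by
    calc (t.erase (Function.update f i 0)).card
        = (t.erase (Function.update f i 0)).card • 1 := by simp
      _ ≤ _ := Finset.card_nsmul_le_sum _ _ _ hone
  have hec : (t.erase (Function.update f i 0)).card = 8 := by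
    rw [Finset.card_erase_of_mem hg0t, htcard]
  rw [← hsplit] at hsum
  rw [hbig] at hsum
  rw [hec] at hrest
  omega

/-! ### Latin squares -/

def Latin (f : Fin 3 → Fin 3 → Fin 3) : Prop :=
  (∀ b, Function.Injective fun a => f a b) ∧ (∀ a, Function.Injective (f a))

def graphF (f : Fin 3 → Fin 3 → Fin 3) : Set P3 := {x | x 2 = f (x 0) (x 1)}

lemma vec_val (a b c : Fin 3) :
    (![a,b,c] : P3) 0 = a ∧ (![a,b,c] : P3) 1 = b ∧ (![a,b,c] : P3) 2 = c := by
  refine ⟨rfl, rfl, rfl⟩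

lemma vec_mem_graphF {f : Fin 3 → Fin 3 → Fin 3} {a b c : Fin 3} :
    (![a,b,c] : P3) ∈ graphF f ↔ c = f a b := Iff.rfl

lemma graph_ovoid {f : Fin 3 → Fin 3 → Fin 3} (hf : Latin f) : IsOvoid (graphF f) := by
  constructor
  · have hinj : Function.Injective (fun p : Fin 3 × Fin 3 => (![p.1, p.2, f p.1 p.2] : P3)) := by
      intro p q h
      have h0 := congrFun h 0
      have h1 := congrFun h 1
      simp only [] at h0 h1
      exact Prod.ext h0 h1
    have himg : graphF f = (fun p : Fin 3 × Fin 3 => (![p.1, p.2, f p.1 p.2] : P3)) '' Set.univ := by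
      ext x
      simp only [Set.image_univ, Set.mem_range, graphF, Set.mem_setOf_eq]
      constructor
      · intro hx
        refine ⟨(x 0, x 1), ?_⟩
        rw [show f (x 0) (x 1) = x 2 from hx.symm]
        exact (eta3 x).symm
      · rintro ⟨p, rfl⟩; rfl
    rw [himg, Set.ncard_image_of_injective _ hinj, Set.ncard_univ]
    simp
  · intro x hx y hy hne hcol
    obtain ⟨i, hi, hj⟩ := ham_one hcol
    have hx' : x 2 = f (x 0) (x 1) := hx
    have hy' : y 2 = f (y 0) (y 1) := hy
    fin_cases i
    · have h1 := hj 1 (by decide)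
      have h2 := hj 2 (by decide)
      refine hi (hf.1 (x 1) ?_)
      show f (x 0) (x 1) = f (y 0) (x 1)
      rw [← hx', h2, hy', h1]
    · have h0 := hj 0 (by decide)
      have h2 := hj 2 (by decide)
      refine hi (hf.2 (x 0) ?_)
      show f (x 0) (x 1) = f (x 0) (y 1)
      rw [← hx', h2, hy', h0]
    · have h0 := hj 0 (by decide)
      have h1 := hj 1 (by decide)
      refine hi ?_
      show x 2 = y 2
      rw [hx', hy', h0, h1]

lemma ovoid_eq_graph {O : Set P3} (hO : IsOvoid O) :
    ∃ f, Latin f ∧ O = graphF f := by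
  classical
  have h : ∀ a b : Fin 3, ∃! x, x ∈ segreLine 2 ![a, b, 0] ∩ O :=
    fun a b => ovoid_line hO 2 ![a, b, 0]
  choose w hw hu using h
  have hwline : ∀ a b, w a b ∈ segreLine 2 ![a,b,0] := fun a b => (hw a b).1
  have hwO : ∀ a b, w a b ∈ O := fun a b => (hw a b).2
  have hw0 : ∀ a b, w a b 0 = a := fun a b => hwline a b 0 (by decide)
  have hw1 : ∀ a b, w a b 1 = b := fun a b => hwline a b 1 (by decide)
  set f : Fin 3 → Fin 3 → Fin 3 := fun a b => w a b 2 with hfdef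
  have weq : ∀ a b, w a b = ![a, b, f a b] := by
    intro a b
    funext j
    fin_cases j
    · exact hw0 a b
    · exact hw1 a b
    · rfl
  have huniq : ∀ x ∈ O, x = w (x 0) (x 1) := by
    intro x hxO
    refine hu (x 0) (x 1) x ⟨?_, hxO⟩
    intro j hj
    fin_cases j
    · rfl
    · rfl
    · exact absurd rfl hj
  have hOg : O = graphF f := by
    ext x
    constructor
    · intro hxO
      exact congrFun (huniq x hxO) 2
    · intro hxg
      have hxe : x = w (x 0) (x 1) := by
        have hve : x = ![x 0, x 1, f (x 0) (x 1)] := by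
          rw [show f (x 0) (x 1) = x 2 from hxg.symm]
          exact eta3 x
        conv_lhs => rw [hve]
        exact (weq _ _).symm
      rw [hxe]; exact hwO _ _
  refine ⟨f, ⟨?_, ?_⟩, hOg⟩
  · intro b a a' heq
    by_contra hne
    have hune : w a b ≠ w a' b := by
      intro he
      exact hne (by rw [← hw0 a b, he, hw0 a' b])
    refine hO.2 (hwO a b) (hwO a' b) hune ?_
    refine ham_single 0 (fun j hj => ?_) hune
    fin_cases j
    · exact absurd rfl hj
    · show w a b 1 = w a' b 1
      rw [hw1 a b, hw1 a' b]
    · exact heq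
  · intro a b b' heq
    by_contra hne
    have hune : w a b ≠ w a b' := by
      intro he
      exact hne (by rw [← hw1 a b, he, hw1 a b'])
    refine hO.2 (hwO a b) (hwO a b') hune ?_
    refine ham_single 1 (fun j hj => ?_) hune
    fin_cases j
    · show w a b 0 = w a b' 0
      rw [hw0 a b, hw0 a b']
    · exact absurd rfl hj
    · exact heq

lemma fin3_sum_aux : ∀ a b c : Fin 3, a ≠ 0 → b ≠ 0 → c ≠ 0 → a + b + c = 0 → b = a ∧ c = a := by
  decide

lemma fin3_two_aux : ∀ x y : Fin 3, x ≠ 0 → y ≠ 0 → y ≠ x → y = x * 2 := by decide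

lemma fin3_mul_inj : ∀ d : Fin 3, d ≠ 0 → ∀ a a' : Fin 3, d * a = d * a' → a = a' := by decide

lemma rows_const {r0 r1 : Fin 3 → Fin 3} (h0 : Function.Injective r0)
    (h1 : Function.Injective r1) (hne : ∀ b, r1 b ≠ r0 b) (b : Fin 3) :
    r1 b - r0 b = r1 0 - r0 0 := by
  have e1 : r1 0 + r1 1 + r1 2 = r0 0 + r0 1 + r0 2 := by
    have h1' := Fintype.sum_bijective r1 (Finite.injective_iff_bijective.mp h1) r1 id (fun x => rfl)
    have h0' := Fintype.sum_bijective r0 (Finite.injective_iff_bijective.mp h0) r0 id (fun x => rfl)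
    rw [Fin.sum_univ_three] at h1' h0'
    rw [Fin.sum_univ_three] at h1' h0'
    exact h1'.trans h0'.symm
  have hsum : (r1 0 - r0 0) + (r1 1 - r0 1) + (r1 2 - r0 2) = 0 := by
    have hk : (r1 0 - r0 0) + (r1 1 - r0 1) + (r1 2 - r0 2)
        = (r1 0 + r1 1 + r1 2) - (r0 0 + r0 1 + r0 2) := by abel
    rw [hk, e1, sub_self]
  have h01 := fin3_sum_aux _ _ _ (sub_ne_zero.mpr (hne 0)) (sub_ne_zero.mpr (hne 1))
    (sub_ne_zero.mpr (hne 2)) hsum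
  fin_cases b
  · rfl
  · exact h01.1
  · exact h01.2

lemma latin_d_ne {f : Fin 3 → Fin 3 → Fin 3} (hf : Latin f) : f 1 0 - f 0 0 ≠ 0 :=
  sub_ne_zero.mpr fun h => (by decide : (1 : Fin 3) ≠ 0) (hf.1 0 h)

lemma latin_form {f : Fin 3 → Fin 3 → Fin 3} (hf : Latin f) :
    f = fun a b => f 0 b + (f 1 0 - f 0 0) * a := by
  have hconst : ∀ a b, f a b - f 0 b = f a 0 - f 0 0 := by
    intro a b
    by_cases ha : a = 0
    · subst ha; simp
    · exact rows_const (hf.2 0) (hf.2 a) (fun b' h => ha (hf.1 b' h)) b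
  have hd1 : f 1 0 - f 0 0 ≠ 0 := latin_d_ne hf
  have hd2 : f 2 0 - f 0 0 = (f 1 0 - f 0 0) * 2 := by
    have hne0 : f 2 0 - f 0 0 ≠ 0 :=
      sub_ne_zero.mpr fun h => (by decide : (2 : Fin 3) ≠ 0) (hf.1 0 h)
    have hned : f 2 0 - f 0 0 ≠ f 1 0 - f 0 0 := by
      intro h
      exact (by decide : (2 : Fin 3) ≠ 1) (hf.1 0 (sub_left_inj.mp h))
    exact fin3_two_aux _ _ hd1 hne0 hned
  funext a b
  fin_cases a
  · show f 0 b = f 0 b + (f 1 0 - f 0 0) * 0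
    rw [mul_zero, add_zero]
  · show f 1 b = f 0 b + (f 1 0 - f 0 0) * 1
    rw [mul_one]
    have h := hconst 1 b
    rw [sub_eq_iff_eq_add'] at h
    exact h
  · show f 2 b = f 0 b + (f 1 0 - f 0 0) * 2
    have h := hconst 2 b
    rw [hd2, sub_eq_iff_eq_add'] at h
    exact h

/-! ### Counting -/

def GF : (Fin 3 → Fin 3) × Fin 3 → Set P3 := fun p => graphF (fun a b => p.1 b + p.2 * a)

lemma GF_inj : Function.Injective GF := by
  rintro ⟨r, d⟩ ⟨r', d'⟩ h
  have hmem : ∀ a b : Fin 3, r b + d * a = r' b + d' * a := by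
    intro a b
    have h1 : (![a, b, r b + d * a] : P3) ∈ GF (r, d) := vec_mem_graphF.mpr rfl
    rw [h] at h1
    exact vec_mem_graphF.mp h1
  have hr : r = r' := by
    funext b
    have := hmem 0 b
    simpa using this
  have hd : d = d' := by
    have := hmem 1 0
    rw [hr, mul_one, mul_one] at this
    exact add_left_cancel this
  rw [hr, hd]

def Fs : Finset ((Fin 3 → Fin 3) × Fin 3) :=
  Finset.univ.filter fun p => Function.Injective p.1 ∧ p.2 ≠ 0

lemma Fs_card : Fs.card = 12 := by decide

lemma ovoid_set_eq : {O : Set P3 | IsOvoid O} = GF '' ↑Fs := by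
  ext O
  simp only [Set.mem_setOf_eq, Set.mem_image, Finset.mem_coe]
  constructor
  · intro hO
    obtain ⟨f, hf, rfl⟩ := ovoid_eq_graph hO
    refine ⟨(f 0, f 1 0 - f 0 0), ?_, ?_⟩
    · simp only [Fs, Finset.mem_filter, Finset.mem_univ, true_and]
      exact ⟨hf.2 0, latin_d_ne hf⟩
    · show graphF _ = graphF f
      exact congrArg graphF (latin_form hf).symm
  · rintro ⟨⟨r, d⟩, hmem, rfl⟩
    simp only [Fs, Finset.mem_filter, Finset.mem_univ, true_and] at hmem
    obtain ⟨hr, hd⟩ := hmem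
    apply graph_ovoid
    constructor
    · intro b a a' heq
      simp only [] at heq
      exact fin3_mul_inj d hd a a' (add_left_cancel heq)
    · intro a b b' heq
      simp only [] at heq
      exact hr (add_right_cancel heq)

lemma count12 : {O : Set P3 | IsOvoid O}.ncard = 12 := by
  rw [ovoid_set_eq, Set.ncard_image_of_injective _ GF_inj, Set.ncard_coe_finset, Fs_card]

lemma ovoid_hyperplane {O : Set P3} (hO : IsOvoid O) : IsGeomHyperplane O := by
  refine ⟨?_, fun i f => Or.inr ?_⟩
  · intro he
    have h := ovoid_card9 hO
    rw [he, Set.ncard_univ] at h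
    rw [Nat.card_eq_fintype_card] at h
    simp at h
  · obtain ⟨x, hx, huniq⟩ := ovoid_line hO i f
    rw [Set.ncard_eq_one]
    exact ⟨x, Set.eq_singleton_iff_unique_mem.mpr ⟨hx, fun y hy => huniq y hy⟩⟩

theorem segre3_ovoids :
    {O : Set (SegrePoint 3) | IsOvoid O}.ncard = 12 ∧
    (∀ O : Set (SegrePoint 3), IsOvoid O → IsGeomHyperplane O) ∧
    (∀ H : Set (SegrePoint 3), IsOvoid H ↔ (IsGeomHyperplane H ∧ H.ncard = 9)) := by
  refine ⟨count12, fun O hO => ovoid_hyperplane hO, fun H => ⟨?_, ?_⟩⟩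
  · intro hH
    exact ⟨ovoid_hyperplane hH, ovoid_card9 hH⟩
  · rintro ⟨hH, h9⟩
    refine ⟨by rw [h9]; norm_num, ?_⟩
    intro x hx y hy hne hcol
    obtain ⟨i, hi, hj⟩ := ham_one hcol
    have hyl : y ∈ segreLine i x := fun j hj' => (hj j hj').symm
    have hxl : x ∈ segreLine i x := fun j _ => rfl
    rcases hH.2 i x with hsub | h1
    · exact no_line hH h9 i x hsub
    · have h2 : 1 < (segreLine i x ∩ H).ncard := by
        rw [Set.one_lt_ncard_iff (Set.toFinite _)]
        exact ⟨x, y, ⟨hxl, hx⟩, ⟨hyl, hy⟩, hne⟩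
      omega
end

section
/- The binary Segre variety S_(4) has exactly 24 ovoids; each ovoid of S_(4) is a geometric hyperplane of S_(4), and the ovoids are exactly the geometric hyperplanes of S_(4) with exactly 27 points. -/
open scoped symmDiff

/-! ### Auxiliary lemmas -/

set_option maxHeartbeats 4000000
set_option maxRecDepth 100000

lemma perm_affine (f : Fin 3 → Fin 3) (hf : Function.Injective f) :
    ∃ a c : Fin 3, (a = 1 ∨ a = 2) ∧ ∀ x, f x = a * x + c := by
  revert hf; revert f; decide

lemma solve_lin : ∀ p q r s : Fin 3, p ≠ q → ∃ x, p * x + r = q * x + s := by decide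

lemma latin2 (g : Fin 3 → Fin 3 → Fin 3)
    (hrow : ∀ x, Function.Injective (g x)) (hcol : ∀ y, Function.Injective (g · y)) :
    ∃ a b c : Fin 3, (a = 1 ∨ a = 2) ∧ (b = 1 ∨ b = 2) ∧ ∀ x y, g x y = a * x + b * y + c := by
  choose B C hB hrowf using fun x => perm_affine (g x) (hrow x)
  have hC : Function.Injective C := by
    intro x x' h
    apply hcol 0
    simp only [hrowf, mul_zero, zero_add, h]
  obtain ⟨a, c, ha, hCf⟩ := perm_affine C hC
  have hBconst : ∀ x, B x = B 0 := by
    intro x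
    by_contra hne
    obtain ⟨y, hy⟩ := solve_lin (B x) (B 0) (C x) (C 0) hne
    have : g x y = g 0 y := by rw [hrowf, hrowf, hy]
    exact hne (by rw [hcol y this])
  refine ⟨a, B 0, c, ha, hB 0, fun x y => ?_⟩
  rw [hrowf, hBconst x, hCf]; open Fin.CommRing in ring

lemma latin3 (h : Fin 3 → Fin 3 → Fin 3 → Fin 3)
    (h1 : ∀ v w, Function.Injective (h · v w))
    (h2 : ∀ u w, Function.Injective (h u · w))
    (h3 : ∀ u v, Function.Injective (h u v ·)) :
    ∃ a b d c : Fin 3, (a = 1 ∨ a = 2) ∧ (b = 1 ∨ b = 2) ∧ (d = 1 ∨ d = 2) ∧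
      ∀ u v w, h u v w = a * u + b * v + d * w + c := by
  choose A B C hA hB hf using fun w => latin2 (h · · w) (fun u => h2 u w) (fun v => h1 v w)
  have hC : Function.Injective C := by
    intro w w' hw
    apply h3 0 0
    simp only [hf, mul_zero, zero_add, hw]
  obtain ⟨d, c, hd, hCf⟩ := perm_affine C hC
  have hAconst : ∀ w, A w = A 0 := by
    intro w
    by_contra hne
    obtain ⟨u, hu⟩ := solve_lin (A w) (A 0) (C w) (C 0) hne
    have : h u 0 w = h u 0 0 := by
      simp only [hf, mul_zero, add_zero, zero_add]
      exact hu
    exact hne (by rw [h3 u 0 this])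
  have hBconst : ∀ w, B w = B 0 := by
    intro w
    by_contra hne
    obtain ⟨v, hv⟩ := solve_lin (B w) (B 0) (C w) (C 0) hne
    have : h 0 v w = h 0 v 0 := by
      simp only [hf, mul_zero, zero_add]
      exact hv
    exact hne (by rw [h3 0 v this])
  refine ⟨A 0, B 0, d, c, hA 0, hB 0, hd, fun u v w => ?_⟩
  rw [hf, hAconst w, hBconst w, hCf]; open Fin.CommRing in ring

lemma collinear_iff {N : ℕ} (x y : SegrePoint N) :
    SegreCollinear x y ↔ ∃ i, x i ≠ y i ∧ ∀ j, j ≠ i → x j = y j := by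
  unfold SegreCollinear hammingDist
  rw [Finset.card_eq_one]
  constructor
  · rintro ⟨i, hi⟩
    have hmem : ∀ j, j ∈ ({j | x j ≠ y j} : Finset (Fin N)) ↔ j = i := by
      intro j; rw [hi]; simp
    refine ⟨i, by simpa using (hmem i).mpr rfl, fun j hj => ?_⟩
    by_contra hne
    exact hj ((hmem j).mp (by simpa using hne))
  · rintro ⟨i, hi, hj⟩
    refine ⟨i, ?_⟩
    ext j
    simp only [Finset.mem_filter, Finset.mem_univ, true_and, Finset.mem_singleton,
      Finset.mem_singleton]
    constructor
    · intro hne; by_contra hji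
      exact absurd (hj j hji) hne
    · rintro rfl; simpa using hi

lemma mem_line_self {N : ℕ} (i : Fin N) (f : SegrePoint N) : f ∈ segreLine i f :=
  fun _ _ => rfl

lemma line_eq_range {N : ℕ} (i : Fin N) (f : SegrePoint N) :
    segreLine i f = Set.range (fun t => Function.update f i t) := by
  ext x
  constructor
  · intro hx
    refine ⟨x i, funext fun j => ?_⟩
    rcases eq_or_ne j i with rfl | hj
    · simp
    · show Function.update f i (x i) j = x j
      rw [Function.update_of_ne hj]; exact (hx j hj).symm
  · rintro ⟨t, rfl⟩ j hj
    show Function.update f i t j = f j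
    rw [Function.update_of_ne hj]

/-- The affine ovoid with parameters `a b d c`. -/
def aff (a b d c : Fin 3) : Set (SegrePoint 4) :=
  {x | x 0 = a * x 1 + b * x 2 + d * x 3 + c}

lemma aff_card : ∀ a b d c : Fin 3,
    (Finset.univ.filter (fun x : SegrePoint 4 => x 0 = a * x 1 + b * x 2 + d * x 3 + c)).card
      = 27 := by decide

lemma aff_line : ∀ a b d c : Fin 3, (a = 1 ∨ a = 2) → (b = 1 ∨ b = 2) → (d = 1 ∨ d = 2) →
    ∀ (i : Fin 4) (f : SegrePoint 4), ∃ t : Fin 3,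
      (fun x : SegrePoint 4 => x 0 = a * x 1 + b * x 2 + d * x 3 + c) (Function.update f i t) ∧
      ∀ s : Fin 3,
        (fun x : SegrePoint 4 => x 0 = a * x 1 + b * x 2 + d * x 3 + c) (Function.update f i s) →
        s = t := by
  decide

lemma count12_s18 : ∀ p : SegrePoint 4,
    (Finset.univ.filter (fun q : Fin 4 × SegrePoint 4 => ∀ j, j ≠ q.1 → p j = q.2 j)).card
      = 12 := by decide

lemma ovoid_of_aff (a b d c : Fin 3) (ha : a = 1 ∨ a = 2) (hb : b = 1 ∨ b = 2)
    (hd : d = 1 ∨ d = 2) : IsOvoid (aff a b d c) := by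
  have mulcancel : ∀ a u v : Fin 3, a ≠ 0 → a * u = a * v → u = v := by decide
  have ha0 : a ≠ 0 := by rcases ha with rfl | rfl <;> decide
  have hb0 : b ≠ 0 := by rcases hb with rfl | rfl <;> decide
  have hd0 : d ≠ 0 := by rcases hd with rfl | rfl <;> decide
  constructor
  · show (aff a b d c).ncard = 27
    have : aff a b d c =
        ↑(Finset.univ.filter
          (fun x : SegrePoint 4 => x 0 = a * x 1 + b * x 2 + d * x 3 + c)) := by
      ext x; simp [aff]
    rw [this, Set.ncard_coe_finset, aff_card]
  · intro x hx y hy hne hcol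
    obtain ⟨i, hii, hoff⟩ := (collinear_iff x y).mp hcol
    have hx' : x 0 = a * x 1 + b * x 2 + d * x 3 + c := hx
    have hy' : y 0 = a * y 1 + b * y 2 + d * y 3 + c := hy
    fin_cases i
    · rw [hoff 1 (by decide), hoff 2 (by decide), hoff 3 (by decide)] at hx'
      exact hii (hx'.trans hy'.symm)
    · rw [hoff 0 (by decide), hy', hoff 2 (by decide), hoff 3 (by decide)] at hx'
      have h1 := add_right_cancel hx'
      have h2 := add_right_cancel h1
      have h3 := add_right_cancel h2
      exact hii (mulcancel a _ _ ha0 h3.symm)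
    · rw [hoff 0 (by decide), hy', hoff 1 (by decide), hoff 3 (by decide)] at hx'
      have h1 := add_right_cancel hx'
      have h2 := add_right_cancel h1
      have h3 := add_left_cancel h2
      exact hii (mulcancel b _ _ hb0 h3.symm)
    · rw [hoff 0 (by decide), hy', hoff 1 (by decide), hoff 2 (by decide)] at hx'
      have h1 := add_right_cancel hx'
      have h2 := add_left_cancel h1
      exact hii (mulcancel d _ _ hd0 h2.symm)

lemma aff_of_ovoid (O : Set (SegrePoint 4)) (hO : IsOvoid O) :
    ∃ a b d c : Fin 3, (a = 1 ∨ a = 2) ∧ (b = 1 ∨ b = 2) ∧ (d = 1 ∨ d = 2) ∧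
      O = aff a b d c := by
  obtain ⟨hcard, hpair⟩ := hO
  have hcard' : O.ncard = 27 := by norm_num at hcard; exact hcard
  -- two points of O agreeing on coordinates 1,2,3 are equal
  have key : ∀ x ∈ O, ∀ y ∈ O, x 1 = y 1 → x 2 = y 2 → x 3 = y 3 → x = y := by
    intro x hx y hy e1 e2 e3
    by_contra hne
    rcases eq_or_ne (x 0) (y 0) with e0 | e0
    · exact hne (funext fun j => by fin_cases j <;> assumption)
    · exact hpair hx hy hne ((collinear_iff x y).mpr
        ⟨0, e0, fun j hj => by fin_cases j <;> first | exact absurd rfl hj | assumption⟩)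
  have hinj : Set.InjOn (fun x : SegrePoint 4 => (x 1, x 2, x 3)) O := by
    intro x hx y hy hxy
    simp only [Prod.mk.injEq] at hxy
    exact key x hx y hy hxy.1 hxy.2.1 hxy.2.2
  have himg : (fun x : SegrePoint 4 => (x 1, x 2, x 3)) '' O = Set.univ := by
    apply Set.eq_of_subset_of_ncard_le (Set.subset_univ _)
    rw [Set.ncard_image_of_injOn hinj, hcard', Set.ncard_univ]
    simp [Nat.card_eq_fintype_card]
  have hsurj : ∀ u v w : Fin 3, ∃ x, x ∈ O ∧ x 1 = u ∧ x 2 = v ∧ x 3 = w := by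
    intro u v w
    have : ((u, v, w) : Fin 3 × Fin 3 × Fin 3) ∈
        (fun x : SegrePoint 4 => (x 1, x 2, x 3)) '' O := himg ▸ Set.mem_univ _
    obtain ⟨x, hx, hxe⟩ := this
    obtain ⟨e1, e2, e3⟩ : x 1 = u ∧ x 2 = v ∧ x 3 = w := by
      simpa [Prod.ext_iff] using hxe
    exact ⟨x, hx, e1, e2, e3⟩
  choose g hgO hg1 hg2 hg3 using hsurj
  -- O is the graph of h
  set h : Fin 3 → Fin 3 → Fin 3 → Fin 3 := fun u v w => g u v w 0 with hh
  have hgraph : ∀ x : SegrePoint 4, x ∈ O ↔ x 0 = h (x 1) (x 2) (x 3) := by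
    intro x
    constructor
    · intro hx
      have := key _ (hgO (x 1) (x 2) (x 3)) x hx (hg1 _ _ _) (hg2 _ _ _) (hg3 _ _ _)
      exact (congrFun this 0).symm
    · intro hx
      have : x = g (x 1) (x 2) (x 3) := by
        funext j
        fin_cases j
        · exact hx
        · exact (hg1 _ _ _).symm
        · exact (hg2 _ _ _).symm
        · exact (hg3 _ _ _).symm
      rw [this]; exact hgO _ _ _
  -- h is injective in each variable
  have hdiff : ∀ (p q : SegrePoint 4), p ∈ O → q ∈ O → (i : Fin 4) → p i ≠ q i →
      (∀ j, j ≠ i → p j = q j) → False := by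
    intro p q hp hq i hne hoff
    have hpq : p ≠ q := fun e => hne (by rw [e])
    exact hpair hp hq hpq ((collinear_iff p q).mpr ⟨i, hne, hoff⟩)
  have h1 : ∀ v w, Function.Injective (h · v w) := by
    intro v w u u' he
    by_contra hne
    refine hdiff (g u v w) (g u' v w) (hgO _ _ _) (hgO _ _ _) 1 ?_ ?_
    · rw [hg1, hg1]; exact hne
    · intro j hj
      fin_cases j
      · exact he
      · exact absurd rfl hj
      · show g u v w 2 = g u' v w 2
        rw [hg2, hg2]
      · show g u v w 3 = g u' v w 3
        rw [hg3, hg3]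
  have h2 : ∀ u w, Function.Injective (h u · w) := by
    intro u w v v' he
    by_contra hne
    refine hdiff (g u v w) (g u v' w) (hgO _ _ _) (hgO _ _ _) 2 ?_ ?_
    · rw [hg2, hg2]; exact hne
    · intro j hj
      fin_cases j
      · exact he
      · show g u v w 1 = g u v' w 1
        rw [hg1, hg1]
      · exact absurd rfl hj
      · show g u v w 3 = g u v' w 3
        rw [hg3, hg3]
  have h3 : ∀ u v, Function.Injective (h u v ·) := by
    intro u v w w' he
    by_contra hne
    refine hdiff (g u v w) (g u v w') (hgO _ _ _) (hgO _ _ _) 3 ?_ ?_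
    · rw [hg3, hg3]; exact hne
    · intro j hj
      fin_cases j
      · exact he
      · show g u v w 1 = g u v w' 1
        rw [hg1, hg1]
      · show g u v w 2 = g u v w' 2
        rw [hg2, hg2]
      · exact absurd rfl hj
  obtain ⟨a, b, d, c, ha, hb, hd, hform⟩ := latin3 h h1 h2 h3
  refine ⟨a, b, d, c, ha, hb, hd, ?_⟩
  ext x
  show x ∈ O ↔ x ∈ aff a b d c
  rw [hgraph x, hform]
  exact Iff.rfl

lemma ovoid_iff_aff (O : Set (SegrePoint 4)) :
    IsOvoid O ↔ ∃ a b d c : Fin 3, (a = 1 ∨ a = 2) ∧ (b = 1 ∨ b = 2) ∧ (d = 1 ∨ d = 2) ∧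
      O = aff a b d c := by
  constructor
  · exact aff_of_ovoid O
  · rintro ⟨a, b, d, c, ha, hb, hd, rfl⟩
    exact ovoid_of_aff a b d c ha hb hd

lemma aff_hyperplane (a b d c : Fin 3) (ha : a = 1 ∨ a = 2) (hb : b = 1 ∨ b = 2)
    (hd : d = 1 ∨ d = 2) : IsGeomHyperplane (aff a b d c) := by
  constructor
  · intro hu
    have h1 : (![c + 1, 0, 0, 0] : SegrePoint 4) ∈ aff a b d c := hu ▸ Set.mem_univ _
    have h2 : c + 1 = a * 0 + b * 0 + d * 0 + c := h1
    simp only [mul_zero, zero_add, add_zero] at h2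
    exact (by decide : ∀ c : Fin 3, c + 1 ≠ c) c h2
  · intro i f
    right
    obtain ⟨t, ht, huniq⟩ := aff_line a b d c ha hb hd i f
    have : segreLine i f ∩ aff a b d c = {Function.update f i t} := by
      ext x
      constructor
      · rintro ⟨hxl, hxa⟩
        have hxr : x = Function.update f i (x i) := by
          rw [line_eq_range] at hxl
          obtain ⟨s, rfl⟩ := hxl
          simp
        rw [hxr] at hxa
        have := huniq (x i) hxa
        rw [Set.mem_singleton_iff, hxr, this]
      · rintro rfl
        refine ⟨?_, ht⟩
        rw [line_eq_range]
        exact ⟨t, rfl⟩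
    rw [this, Set.ncard_singleton]


lemma aff_inj (a b d c a' b' d' c' : Fin 3) (h : aff a b d c = aff a' b' d' c') :
    a = a' ∧ b = b' ∧ d = d' ∧ c = c' := by
  have hval : ∀ u v w : Fin 3,
      a * u + b * v + d * w + c = a' * u + b' * v + d' * w + c' := by
    intro u v w
    have hx : (![a * u + b * v + d * w + c, u, v, w] : SegrePoint 4) ∈ aff a b d c := rfl
    have hx' : (![a * u + b * v + d * w + c, u, v, w] : SegrePoint 4) ∈ aff a' b' d' c' :=
      h ▸ hx
    exact hx'
  have h0 := hval 0 0 0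
  have h1 := hval 1 0 0
  have h2 := hval 0 1 0
  have h3 := hval 0 0 1
  simp only [mul_zero, mul_one, zero_add, add_zero] at h0 h1 h2 h3
  rw [h0] at h1 h2 h3
  exact ⟨add_right_cancel h1, add_right_cancel h2, add_right_cancel h3, h0⟩

lemma card_univ_pairs : (Finset.univ : Finset (Fin 4 × SegrePoint 4)).card = 324 := by decide

lemma hyperplane27_ovoid (H : Set (SegrePoint 4)) (hH : IsGeomHyperplane H)
    (h27 : H.ncard = 27) : IsOvoid H := by
  classical
  have hfin : H.Finite := Set.toFinite H
  set HF := hfin.toFinset with hHF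
  have hHFcard : HF.card = 27 := by
    rw [← Set.ncard_eq_toFinset_card H hfin, h27]
  set cnt : Fin 4 × SegrePoint 4 → ℕ :=
    fun q => (HF.filter (fun p => ∀ j, j ≠ q.1 → p j = q.2 j)).card with hcnt
  have stepA : ∀ q : Fin 4 × SegrePoint 4, segreLine q.1 q.2 ∩ H =
      ↑(HF.filter (fun p => ∀ j, j ≠ q.1 → p j = q.2 j)) := by
    intro q
    ext p
    simp only [Set.mem_inter_iff, Finset.coe_filter, Set.mem_setOf_eq,
      Set.Finite.mem_toFinset, hHF]
    constructor
    · rintro ⟨hl, hm⟩; exact ⟨hm, hl⟩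
    · rintro ⟨hm, hl⟩; exact ⟨hl, hm⟩
  have hc : ∀ q : Fin 4 × SegrePoint 4, (segreLine q.1 q.2 ∩ H).ncard = cnt q := by
    intro q; rw [stepA q, Set.ncard_coe_finset]
  have hB : ∀ q : Fin 4 × SegrePoint 4, 1 ≤ cnt q := by
    intro q
    rcases hH.2 q.1 q.2 with hsub | hone
    · apply Finset.card_pos.mpr
      exact ⟨q.2, Finset.mem_filter.mpr
        ⟨(Set.Finite.mem_toFinset hfin).mpr (hsub (mem_line_self _ _)), fun j _ => rfl⟩⟩
    · rw [hc q] at hone; omega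
  have stepC : ∑ q : Fin 4 × SegrePoint 4, cnt q = 324 := by
    have e1 : ∀ q : Fin 4 × SegrePoint 4,
        cnt q = ∑ p ∈ HF, if (∀ j, j ≠ q.1 → p j = q.2 j) then 1 else 0 := by
      intro q; exact Finset.card_filter _ _
    calc ∑ q : Fin 4 × SegrePoint 4, cnt q
        = ∑ q : Fin 4 × SegrePoint 4, ∑ p ∈ HF,
            if (∀ j, j ≠ q.1 → p j = q.2 j) then 1 else 0 := by
          exact Finset.sum_congr rfl fun q _ => e1 q
      _ = ∑ p ∈ HF, ∑ q : Fin 4 × SegrePoint 4,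
            if (∀ j, j ≠ q.1 → p j = q.2 j) then 1 else 0 := Finset.sum_comm
      _ = ∑ p ∈ HF, (12 : ℕ) := by
          refine Finset.sum_congr rfl fun p _ => ?_
          rw [← Finset.card_filter]
          exact count12_s18 p
      _ = 324 := by rw [Finset.sum_const, hHFcard]; rfl
  have hall : ∀ q : Fin 4 × SegrePoint 4, cnt q = 1 := by
    intro q
    by_contra hne
    have h2 : 2 ≤ cnt q := by have := hB q; omega
    have hbig : 325 ≤ ∑ q : Fin 4 × SegrePoint 4, cnt q := by
      rw [← Finset.add_sum_erase _ cnt (Finset.mem_univ q)]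
      have hle : (Finset.univ.erase q).card ≤ ∑ x ∈ Finset.univ.erase q, cnt x := by
        calc (Finset.univ.erase q).card = ∑ _x ∈ Finset.univ.erase q, 1 := by
              rw [Finset.sum_const, smul_eq_mul, mul_one]
          _ ≤ ∑ x ∈ Finset.univ.erase q, cnt x := Finset.sum_le_sum fun i _ => hB i
      have hec : (Finset.univ.erase q).card = 323 := by
        rw [Finset.card_erase_of_mem (Finset.mem_univ q), card_univ_pairs]
      omega
    rw [stepC] at hbig
    omega
  constructor
  · rw [h27]; norm_num
  · intro x hx y hy hne hcol
    obtain ⟨i, hii, hoff⟩ := (collinear_iff x y).mp hcol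
    have hxm : x ∈ HF.filter (fun p => ∀ j, j ≠ i → p j = x j) :=
      Finset.mem_filter.mpr ⟨(Set.Finite.mem_toFinset hfin).mpr hx, fun j _ => rfl⟩
    have hym : y ∈ HF.filter (fun p => ∀ j, j ≠ i → p j = x j) :=
      Finset.mem_filter.mpr
        ⟨(Set.Finite.mem_toFinset hfin).mpr hy, fun j hj => (hoff j hj).symm⟩
    have hlt : 1 < cnt (i, x) :=
      Finset.one_lt_card.mpr ⟨x, hxm, y, hym, fun e => hne e⟩
    rw [hall (i, x)] at hlt
    omega

theorem segre4_ovoids :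
    {O : Set (SegrePoint 4) | IsOvoid O}.ncard = 24 ∧
    (∀ O : Set (SegrePoint 4), IsOvoid O → IsGeomHyperplane O) ∧
    (∀ H : Set (SegrePoint 4), IsOvoid H ↔ (IsGeomHyperplane H ∧ H.ncard = 27)) := by
  classical
  have hyp : ∀ O : Set (SegrePoint 4), IsOvoid O → IsGeomHyperplane O := by
    intro O hO
    obtain ⟨a, b, d, c, ha, hb, hd, rfl⟩ := aff_of_ovoid O hO
    exact aff_hyperplane a b d c ha hb hd
  have count : {O : Set (SegrePoint 4) | IsOvoid O}.ncard = 24 := by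
    have hrepr : {O : Set (SegrePoint 4) | IsOvoid O} =
        ↑((Finset.univ.filter (fun p : Fin 3 × Fin 3 × Fin 3 × Fin 3 =>
            (p.1 = 1 ∨ p.1 = 2) ∧ (p.2.1 = 1 ∨ p.2.1 = 2) ∧ (p.2.2.1 = 1 ∨ p.2.2.1 = 2))).image
          (fun p => aff p.1 p.2.1 p.2.2.1 p.2.2.2)) := by
      ext O
      simp only [Set.mem_setOf_eq, Finset.coe_image, Set.mem_image, Finset.mem_coe,
        Finset.mem_filter, Finset.mem_univ, true_and]
      rw [ovoid_iff_aff]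
      constructor
      · rintro ⟨a, b, d, c, ha, hb, hd, rfl⟩
        exact ⟨(a, b, d, c), ⟨ha, hb, hd⟩, rfl⟩
      · rintro ⟨⟨a, b, d, c⟩, ⟨ha, hb, hd⟩, rfl⟩
        exact ⟨a, b, d, c, ha, hb, hd, rfl⟩
    rw [hrepr, Set.ncard_coe_finset]
    rw [Finset.card_image_of_injOn (fun p _ p' _ he => ?_)]
    · decide
    · obtain ⟨ea, eb, ed, ec⟩ := aff_inj _ _ _ _ _ _ _ _ he
      exact Prod.ext ea (Prod.ext eb (Prod.ext ed ec))
  refine ⟨count, hyp, fun H => ⟨fun h => ⟨hyp H h, by rw [h.1]; rfl⟩, fun h => hyperplane27_ovoid H h.1 h.2⟩⟩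
end
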